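/- For X ∈ t₀, the tangent space of the real flag manifold R_{exp(X)·p₀} = exp(X)·Λ at X₀ equals ⊕_{α∈R⁺_{X₀}} { cos(2πα(X))η − sin(2πα(X)) J_{O,X₀}(η) : η ∈ p_{X₀,α} }, where J_{O,X₀} = (−1/(2πα(X₀))) ad(X₀) restricted to [g,X₀] (on the α-component). -/

import Mathlib

open scoped RealInnerProductSpace

noncomputable section

/-- The restricted root space `g_{t,[α]} = ⋂_{X ∈ t} ker (ad(X)² + 4π²α(X)²·id)`. -/
def restrictedRootSpace {g : Type*} [NormedAddCommGroup g] [InnerProductSpace ℝ g]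
    (br : g →ₗ[ℝ] g →ₗ[ℝ] g) (t : Submodule ℝ g) (α : t →ₗ[ℝ] ℝ) : Submodule ℝ g :=
  ⨅ X : t, LinearMap.ker
    ((br (X : g)) ∘ₗ (br (X : g)) + (4 * Real.pi ^ 2 * (α X) ^ 2) • LinearMap.id)

/-! On a restricted root space all of `ad t₀` acts through the single operator `ad X₀`:
polarising `ad(Y)² = -4π²α(Y)²` gives `ad Y ∘ ad Z = -4π²α(Y)α(Z)`, which forces
`α(X₀)·ad Y = α(Y)·ad X₀`. Hence, with `ζ = (2πα(X₀))⁻¹·[X₀, η]` and `c = 2πα(X)`, the operator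
`ad X` sends `η ↦ c·ζ` and `ζ ↦ -c·η`, so it generates a rotation of the plane spanned by
`η, ζ`, and its exponential series sums to `cos c·η + sin c·ζ`. -/

open NormedSpace
open scoped Nat

section Rotation

variable {E : Type*} [NormedAddCommGroup E] [NormedSpace ℝ E]

theorem pow_apply_of_rotation (A : E →L[ℝ] E) {η ζ : E} {c : ℝ}
    (hη : A η = c • ζ) (hζ : A ζ = -c • η) (n : ℕ) :
    (A ^ (2 * n)) η = ((-1) ^ n * c ^ (2 * n)) • η ∧
      (A ^ (2 * n + 1)) η = ((-1) ^ n * c ^ (2 * n + 1)) • ζ := by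
  induction n with
  | zero => simp [hη]
  | succ n ih =>
    have heven : (A ^ (2 * (n + 1))) η = ((-1) ^ (n + 1) * c ^ (2 * (n + 1))) • η := by
      rw [show 2 * (n + 1) = 2 * n + 1 + 1 by ring, pow_succ', mul_apply_eq_comp,
        ih.2, map_smul, hζ, smul_smul]
      congr 1
      ring
    refine ⟨heven, ?_⟩
    rw [pow_succ', mul_apply_eq_comp, heven, map_smul, hη, smul_smul]
    congr 1
    ring

theorem exp_apply_of_rotation [CompleteSpace E] (A : E →L[ℝ] E) {η ζ : E} {c : ℝ}
    (hη : A η = c • ζ) (hζ : A ζ = -c • η) :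
    exp A η = Real.cos c • η + Real.sin c • ζ := by
  have hexp : HasSum (fun n => (n !⁻¹ : ℝ) • (A ^ n) η) (exp A η) :=
    (exp_series_hasSum_exp' (𝕂 := ℝ) A).mapL (ContinuousLinearMap.apply ℝ E η)
  refine hexp.unique (HasSum.even_add_odd ?_ ?_)
  · convert (Real.hasSum_cos c).smul_const η using 2 with n
    rw [(pow_apply_of_rotation A hη hζ n).1, smul_smul, div_eq_inv_mul]
  · convert (Real.hasSum_sin c).smul_const ζ using 2 with n
    rw [(pow_apply_of_rotation A hη hζ n).2, smul_smul, div_eq_inv_mul]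

end Rotation

section RestrictedRootSpace

variable {g : Type*} [NormedAddCommGroup g] [InnerProductSpace ℝ g]
  {br : g →ₗ[ℝ] g →ₗ[ℝ] g} {t : Submodule ℝ g} {α : t →ₗ[ℝ] ℝ} {η : g}

theorem mem_restrictedRootSpace_iff :
    η ∈ restrictedRootSpace br t α ↔
      ∀ Y : t, br Y (br Y η) = -(4 * Real.pi ^ 2 * α Y ^ 2) • η := by
  simp only [restrictedRootSpace, Submodule.mem_iInf, LinearMap.mem_ker, LinearMap.add_apply,
    LinearMap.comp_apply, LinearMap.smul_apply, LinearMap.id_apply, neg_smul,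
    eq_neg_iff_add_eq_zero]

theorem br_br_comm_of_abelian
    (hjacobi : ∀ x y z : g, br x (br y z) = br (br x y) z + br y (br x z))
    (ht : ∀ x ∈ t, ∀ y ∈ t, br x y = 0) (Y Z : t) (v : g) :
    br Y (br Z v) = br Z (br Y v) := by
  simpa [ht Y Y.2 Z Z.2] using hjacobi Y Z v

theorem br_mem_restrictedRootSpace
    (hcomm : ∀ (Y Z : t) (v : g), br Y (br Z v) = br Z (br Y v))
    (hη : η ∈ restrictedRootSpace br t α) (Z : t) :
    br Z η ∈ restrictedRootSpace br t α := by
  rw [mem_restrictedRootSpace_iff] at hη ⊢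
  intro Y
  rw [hcomm Y Z, hcomm Y Z, hη Y, map_smul]

theorem br_br_of_mem_restrictedRootSpace
    (hcomm : ∀ (Y Z : t) (v : g), br Y (br Z v) = br Z (br Y v))
    (hη : η ∈ restrictedRootSpace br t α) (Y Z : t) :
    br Y (br Z η) = -(4 * Real.pi ^ 2 * α Y * α Z) • η := by
  rw [mem_restrictedRootSpace_iff] at hη
  have hYZ := hη (Y + Z)
  simp only [Submodule.coe_add, map_add, LinearMap.add_apply, hη Y, hη Z, hcomm Z Y η] at hYZ
  linear_combination (norm := module) (2 : ℝ)⁻¹ • hYZ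

theorem smul_br_eq_smul_br_of_mem_restrictedRootSpace
    (hcomm : ∀ (Y Z : t) (v : g), br Y (br Z v) = br Z (br Y v))
    (hη : η ∈ restrictedRootSpace br t α) (Y : t) {Z : t} (hZ : α Z ≠ 0) :
    α Z • br Y η = α Y • br Z η := by
  set w := α Z • br Y η - α Y • br Z η
  have hw : w ∈ restrictedRootSpace br t α :=
    sub_mem (Submodule.smul_mem _ _ (br_mem_restrictedRootSpace hcomm hη Y))
      (Submodule.smul_mem _ _ (br_mem_restrictedRootSpace hcomm hη Z))
  have hZw : br Z w = 0 := by
    simp only [w, map_sub, map_smul, br_br_of_mem_restrictedRootSpace hcomm hη]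
    module
  have h := (mem_restrictedRootSpace_iff.mp hw) Z
  rw [hZw, map_zero, eq_comm, smul_eq_zero] at h
  have hc : -(4 * Real.pi ^ 2 * α Z ^ 2) ≠ 0 := neg_ne_zero.mpr (by positivity)
  exact sub_eq_zero.mp (h.resolve_left hc)

theorem exp_br_apply_of_mem_restrictedRootSpace [FiniteDimensional ℝ g]
    (hcomm : ∀ (Y Z : t) (v : g), br Y (br Z v) = br Z (br Y v))
    (hη : η ∈ restrictedRootSpace br t α) (X : t) {X₀ : t} (hX₀ : α X₀ ≠ 0) :
    exp (LinearMap.toContinuousLinearMap (br (X : g))) η =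
      Real.cos (2 * Real.pi * α X) • η
        + Real.sin (2 * Real.pi * α X) • (2 * Real.pi * α X₀)⁻¹ • br X₀ η := by
  apply exp_apply_of_rotation
  · have h := smul_br_eq_smul_br_of_mem_restrictedRootSpace hcomm hη X hX₀
    calc br X η = (α X₀)⁻¹ • (α X₀ • br X η) := by rw [inv_smul_smul₀ hX₀]
      _ = (2 * Real.pi * α X) • (2 * Real.pi * α X₀)⁻¹ • br X₀ η := by
        rw [h, smul_smul, smul_smul]
        congr 1
        field_simp
  · change br X ((2 * Real.pi * α X₀)⁻¹ • br X₀ η) = _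
    rw [map_smul, br_br_of_mem_restrictedRootSpace hcomm hη, smul_smul]
    congr 1
    field_simp
    ring

end RestrictedRootSpace

/-- The tangent space of `exp(X)·Λ` at `X₀` (which lies on it, as `X ∈ t₀` fixes `X₀`) is modelled
as the image of `T_{X₀}Λ = ⊕_{α ∈ R⁺} p_{X₀,α}` under `Ad(exp X) = exp(ad X)`. -/
theorem stmt_14_general (g : Type*) [NormedAddCommGroup g] [InnerProductSpace ℝ g]
    [FiniteDimensional ℝ g]
    (br : g →ₗ[ℝ] g →ₗ[ℝ] g)
    (hjacobi : ∀ x y z : g, br x (br y z) = br (br x y) z + br y (br x z))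
    (p : Submodule ℝ g)
    -- `t₀` is a maximal abelian subalgebra of `g` contained in `p`:
    (t₀ : Submodule ℝ g)
    (ht₀ab : ∀ x ∈ t₀, ∀ y ∈ t₀, br x y = 0)
    -- `X₀` is a regular point of `t₀`, `RP` the positive restricted roots `R⁺_{X₀}`:
    (X₀ : t₀)
    (RP : Finset (t₀ →ₗ[ℝ] ℝ))
    (hX₀reg : ∀ α ∈ RP, 0 < α X₀)
    (X : t₀) :
    Submodule.map
        (((NormedSpace.exp (LinearMap.toContinuousLinearMap (br (X : g)))) :
            g →L[ℝ] g) : g →ₗ[ℝ] g)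
        (⨆ α ∈ RP, (restrictedRootSpace br t₀ α ⊓ p))
      = ⨆ α ∈ RP, Submodule.map
          ((Real.cos (2 * Real.pi * α X)) • (LinearMap.id : g →ₗ[ℝ] g)
            - (Real.sin (2 * Real.pi * α X))
                • ((-(2 * Real.pi * α X₀)⁻¹) • br (X₀ : g)))
          (restrictedRootSpace br t₀ α ⊓ p) := by
  have hcomm := br_br_comm_of_abelian hjacobi ht₀ab
  simp only [Submodule.map_iSup]
  refine iSup_congr fun α => iSup_congr fun hα => SetLike.coe_injective ?_
  simp only [Submodule.map_coe]
  refine Set.image_congr fun η hη => ?_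
  rw [ContinuousLinearMap.coe_coe,
    exp_br_apply_of_mem_restrictedRootSpace hcomm hη.1 X (hX₀reg α hα).ne']
  simp only [neg_smul, smul_neg, sub_neg_eq_add, LinearMap.add_apply, LinearMap.smul_apply,
    LinearMap.id_apply]

/-- For `X ∈ t₀`, the tangent space of the real flag manifold
`R_{exp(X)·p₀} = exp(X)·Λ` at `X₀` equals
`⊕_{α ∈ R⁺_{X₀}} { cos(2πα(X))η − sin(2πα(X)) J_{O,X₀}(η) : η ∈ p_{X₀,α} }`,
where `J_{O,X₀} = (−1/(2πα(X₀))) ad(X₀)` on the `α`-component.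

Since `X ∈ t₀` fixes `X₀` we have `exp(X)·Λ ∋ X₀`, and its tangent space at `X₀` is the
image under `Ad(exp X) = exp(ad X)` of `T_{X₀}Λ = ⊕_{α ∈ R⁺} p_{X₀,α}`; the statement
says that this image is the displayed direct sum. -/
theorem stmt_14 (g : Type*) [NormedAddCommGroup g] [InnerProductSpace ℝ g]
    [FiniteDimensional ℝ g]
    (br : g →ₗ[ℝ] g →ₗ[ℝ] g)
    (halt : ∀ x : g, br x x = 0)
    (hjacobi : ∀ x y z : g, br x (br y z) = br (br x y) z + br y (br x z))
    (hinv : ∀ x y z : g, ⟪br x y, z⟫ = -⟪y, br x z⟫)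
    (σ : g →ₗ[ℝ] g) (hσbr : ∀ x y, σ (br x y) = br (σ x) (σ y))
    (hσinv : ∀ x, σ (σ x) = x)
    (k p : Submodule ℝ g)
    (hk : ∀ x, x ∈ k ↔ σ x = x) (hp : ∀ x, x ∈ p ↔ σ x = -x)
    -- `t₀` is a maximal abelian subalgebra of `g` contained in `p`:
    (t₀ : Submodule ℝ g) (ht₀p : t₀ ≤ p)
    (ht₀ab : ∀ x ∈ t₀, ∀ y ∈ t₀, br x y = 0)
    (ht₀max : ∀ t' : Submodule ℝ g, t' ≤ p → (∀ x ∈ t', ∀ y ∈ t', br x y = 0) →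
      t₀ ≤ t' → t' = t₀)
    -- `X₀` is a regular point of `t₀`, `RP` the positive restricted roots `R⁺_{X₀}`:
    (X₀ : t₀)
    (RP : Finset (t₀ →ₗ[ℝ] ℝ))
    (hRP : ∀ α ∈ RP, α ≠ 0 ∧ restrictedRootSpace br t₀ α ≠ ⊥)
    (hX₀reg : ∀ α ∈ RP, 0 < α X₀)
    (X : t₀) :
    Submodule.map
        (((NormedSpace.exp (LinearMap.toContinuousLinearMap (br (X : g)))) :
            g →L[ℝ] g) : g →ₗ[ℝ] g)
        (⨆ α ∈ RP, (restrictedRootSpace br t₀ α ⊓ p))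
      = ⨆ α ∈ RP, Submodule.map
          ((Real.cos (2 * Real.pi * α X)) • (LinearMap.id : g →ₗ[ℝ] g)
            - (Real.sin (2 * Real.pi * α X))
                • ((-(2 * Real.pi * α X₀)⁻¹) • br (X₀ : g)))
          (restrictedRootSpace br t₀ α ⊓ p) :=
  stmt_14_general g br hjacobi p t₀ ht₀ab X₀ RP hX₀reg X
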